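/- The sum over positive integer solutions of the alternating q-series identity Σ_{i=0}^{2n} (−1)^i (−q;q)_{2n−i} / ((q²;q)_{2n−i} (q;q)_{i+1}) = (−q;q)_{2n+1}/(q²;q)_{2n+1} holds for every nonnegative integer n. -/

import Mathlib

/-!
Since `(1 - q) (q²;q)_m = (q;q)_{m+1}`, multiplying the identity by `(q;q)_{M+2} / (1 - q)`
(here `M = 2n`) turns it into `S (M + 2) = 0`, where `S = alternatingQBinomialSum`,
`S M = Σ_{j<M} (-1)^j [M, j]_q (-q;q)_{M-1-j}`.
The q-Pascal rule together with `(-q;q)_{k+1} = (-q;q)_k (1 + q^{k+1})` makes consecutive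
terms telescope, giving `S (M + 1) = S M + (-1)^M`, so `S` vanishes at every even argument.
-/

noncomputable section

/-- The q-Pochhammer symbol `(a;q)_m = ∏_{t=0}^{m−1}(1 − a q^t)` in `ℚ(q)`. -/
def qPoch (a : RatFunc ℚ) (m : ℕ) : RatFunc ℚ :=
  ∏ t ∈ Finset.range m, (1 - a * RatFunc.X ^ t)

open Finset

section CommRing

variable {R : Type*} [CommRing R]

def qPochhammer (a q : R) (m : ℕ) : R :=
  ∏ t ∈ range m, (1 - a * q ^ t)

@[simp]
theorem qPochhammer_zero (a q : R) : qPochhammer a q 0 = 1 := by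
  simp [qPochhammer]

theorem qPochhammer_succ (a q : R) (m : ℕ) :
    qPochhammer a q (m + 1) = qPochhammer a q m * (1 - a * q ^ m) :=
  prod_range_succ _ _

theorem one_sub_mul_qPochhammer_sq (q : R) (m : ℕ) :
    (1 - q) * qPochhammer (q ^ 2) q m = qPochhammer q q (m + 1) := by
  induction m with
  | zero => simp [qPochhammer_succ]
  | succ m ih =>
    rw [qPochhammer_succ, qPochhammer_succ q q (m + 1), ← ih]
    ring

-- The truncated `M - j` only occurs where `[M, j] = 0`.
def qBinomial (q : R) : ℕ → ℕ → R
  | _, 0 => 1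
  | 0, _ + 1 => 0
  | M + 1, j + 1 => qBinomial q M (j + 1) + q ^ (M - j) * qBinomial q M j

@[simp]
theorem qBinomial_zero_right (q : R) (M : ℕ) : qBinomial q M 0 = 1 := by
  cases M <;> rfl

theorem qBinomial_succ_succ (q : R) (M j : ℕ) :
    qBinomial q (M + 1) (j + 1) = qBinomial q M (j + 1) + q ^ (M - j) * qBinomial q M j :=
  rfl

theorem qBinomial_eq_zero_of_lt (q : R) {M j : ℕ} (h : M < j) : qBinomial q M j = 0 := by
  induction M generalizing j with
  | zero => obtain ⟨j, rfl⟩ := Nat.exists_eq_add_one_of_ne_zero h.ne'; rfl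
  | succ M ih =>
    obtain ⟨j, rfl⟩ := Nat.exists_eq_add_one_of_ne_zero (Nat.ne_zero_of_lt h)
    rw [qBinomial_succ_succ, ih (by omega), ih (by omega), mul_zero, add_zero]

@[simp]
theorem qBinomial_self (q : R) (M : ℕ) : qBinomial q M M = 1 := by
  induction M with
  | zero => rfl
  | succ M ih => rw [qBinomial_succ_succ, qBinomial_eq_zero_of_lt q M.lt_succ_self, ih]; simp

theorem qBinomial_mul_qPochhammer_mul_qPochhammer (q : R) {M j : ℕ} (h : j ≤ M) :
    qBinomial q M j * qPochhammer q q j * qPochhammer q q (M - j) = qPochhammer q q M := by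
  induction M generalizing j with
  | zero => obtain rfl := Nat.le_zero.mp h; simp
  | succ M ih =>
    cases j with
    | zero => simp
    | succ j =>
      rw [qBinomial_succ_succ, Nat.add_sub_add_right, qPochhammer_succ q q M]
      rcases (Nat.succ_le_succ_iff.mp h).lt_or_eq with h | rfl
      · obtain ⟨k, rfl⟩ := Nat.exists_eq_add_of_lt h
        have ih₁ := ih (j := j + 1) (by omega)
        have ih₂ := ih (j := j) (by omega)
        rw [show j + k + 1 - (j + 1) = k by omega] at ih₁
        rw [show j + k + 1 - j = k + 1 by omega, qPochhammer_succ] at ih₂ ⊢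
        rw [qPochhammer_succ] at ih₁ ⊢
        linear_combination (1 - q * q ^ k) * ih₁ + q ^ (k + 1) * (1 - q * q ^ j) * ih₂
      · simp [qBinomial_eq_zero_of_lt q j.lt_succ_self, qPochhammer_succ]

def alternatingQBinomialSum (q : R) (M : ℕ) : R :=
  ∑ j ∈ range M, (-1) ^ j * qBinomial q M j * qPochhammer (-q) q (M - (j + 1))

theorem qPochhammer_neg_self_succ (q : R) (k : ℕ) :
    qPochhammer (-q) q (k + 1) = qPochhammer (-q) q k * (1 + q ^ (k + 1)) := by
  rw [qPochhammer_succ]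
  ring

theorem alternatingQBinomialSum_succ (q : R) (M : ℕ) :
    alternatingQBinomialSum q (M + 1) = alternatingQBinomialSum q M + (-1) ^ M := by
  have pascal : alternatingQBinomialSum q (M + 1) =
      ∑ j ∈ range (M + 1), (-1) ^ j * qBinomial q M j * qPochhammer (-q) q (M - j) -
        ∑ i ∈ range M, (-1) ^ i * q ^ (M - i) * qBinomial q M i *
          qPochhammer (-q) q (M - (i + 1)) := by
    rw [alternatingQBinomialSum, sum_range_succ', sum_range_succ' _ M, ← sub_add_eq_add_sub,
      ← sum_sub_distrib]
    congr 1
    · refine sum_congr rfl fun i _ => ?_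
      rw [qBinomial_succ_succ, show M + 1 - (i + 1 + 1) = M - (i + 1) by omega]
      ring
    · simp
  rw [pascal, sum_range_succ, qBinomial_self, Nat.sub_self, qPochhammer_zero,
    alternatingQBinomialSum, add_sub_right_comm, ← sum_sub_distrib]
  congr 1
  · refine sum_congr rfl fun i hi => ?_
    have hi := mem_range.mp hi
    obtain ⟨k, hk⟩ : ∃ k, M - i = k + 1 := ⟨M - (i + 1), by omega⟩
    rw [hk, show M - (i + 1) = k by omega, qPochhammer_neg_self_succ]
    ring
  · ring

theorem alternatingQBinomialSum_eq_zero_of_even (q : R) {M : ℕ} (hM : Even M) :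
    alternatingQBinomialSum q M = 0 := by
  obtain ⟨n, rfl⟩ := hM
  induction n with
  | zero => simp [alternatingQBinomialSum]
  | succ n ih =>
    rw [show n + 1 + (n + 1) = n + n + 1 + 1 by omega, alternatingQBinomialSum_succ,
      alternatingQBinomialSum_succ, ih, pow_succ, ← two_mul, pow_mul]
    ring

theorem sum_range_alternating_qBinomial_succ (q : R) {M : ℕ} (hM : Even M) :
    ∑ i ∈ range (M + 1), (-1) ^ i * qBinomial q (M + 2) (i + 1) * qPochhammer (-q) q (M - i) =
      qPochhammer (-q) q (M + 1) := by
  have h : alternatingQBinomialSum q (M + 1 + 1) = 0 :=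
    alternatingQBinomialSum_eq_zero_of_even q (hM.add even_two)
  rw [alternatingQBinomialSum, sum_range_succ'] at h
  simp only [show ∀ i, M + 1 + 1 - (i + 1 + 1) = M - i by omega, pow_succ, pow_zero,
    qBinomial_zero_right, mul_neg_one, neg_mul, sum_neg_distrib, one_mul, zero_add,
    Nat.add_sub_cancel] at h
  linear_combination -h

end CommRing

section Field

variable {K : Type*} [Field K] {q : K}

theorem one_sub_ne_zero_of_not_isOfFinOrder (hq : ¬IsOfFinOrder q) : 1 - q ≠ 0 :=
  sub_ne_zero.mpr fun h => hq (h ▸ IsOfFinOrder.one)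

theorem qPochhammer_self_ne_zero (hq : ¬IsOfFinOrder q) (m : ℕ) : qPochhammer q q m ≠ 0 :=
  prod_ne_zero_iff.mpr fun t _ h => hq <| isOfFinOrder_iff_pow_eq_one.mpr
    ⟨t + 1, t.succ_pos, by rw [pow_succ']; exact (sub_eq_zero.mp h).symm⟩

theorem inv_qPochhammer_sq (hq : ¬IsOfFinOrder q) (m : ℕ) :
    (qPochhammer (q ^ 2) q m)⁻¹ = (1 - q) / qPochhammer q q (m + 1) := by
  rw [← one_sub_mul_qPochhammer_sq,
    div_mul_cancel_left₀ (one_sub_ne_zero_of_not_isOfFinOrder hq)]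

theorem inv_qPochhammer_sq_mul_qPochhammer (hq : ¬IsOfFinOrder q) (m i : ℕ) :
    (qPochhammer (q ^ 2) q m * qPochhammer q q (i + 1))⁻¹ =
      (1 - q) / qPochhammer q q (m + i + 2) * qBinomial q (m + i + 2) (i + 1) := by
  have h := qBinomial_mul_qPochhammer_mul_qPochhammer q (M := m + i + 2) (j := i + 1) (by omega)
  rw [show m + i + 2 - (i + 1) = m + 1 by omega] at h
  rw [mul_inv, inv_qPochhammer_sq hq]
  have h₁ := qPochhammer_self_ne_zero hq (m + 1)
  have h₂ := qPochhammer_self_ne_zero hq (i + 1)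
  have h₃ := qPochhammer_self_ne_zero hq (m + i + 2)
  field_simp
  linear_combination (q - 1) * h

theorem sum_alternating_qPochhammer_div (hq : ¬IsOfFinOrder q) {M : ℕ} (hM : Even M) :
    ∑ i ∈ range (M + 1), (-1) ^ i * qPochhammer (-q) q (M - i) /
        (qPochhammer (q ^ 2) q (M - i) * qPochhammer q q (i + 1)) =
      qPochhammer (-q) q (M + 1) / qPochhammer (q ^ 2) q (M + 1) := by
  calc _ = ∑ i ∈ range (M + 1), (1 - q) / qPochhammer q q (M + 2) *
          ((-1) ^ i * qBinomial q (M + 2) (i + 1) * qPochhammer (-q) q (M - i)) := by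
        refine sum_congr rfl fun i hi => ?_
        rw [div_eq_mul_inv, inv_qPochhammer_sq_mul_qPochhammer hq,
          show M - i + i + 2 = M + 2 by have := mem_range.mp hi; omega]
        ring
    _ = (1 - q) / qPochhammer q q (M + 2) * qPochhammer (-q) q (M + 1) := by
        rw [← mul_sum, sum_range_alternating_qBinomial_succ q hM]
    _ = _ := by
        rw [div_eq_mul_inv _ (qPochhammer (q ^ 2) q (M + 1)), inv_qPochhammer_sq hq]
        ring

end Field

theorem RatFunc.not_isOfFinOrder_X {K : Type*} [Field K] :
    ¬IsOfFinOrder (RatFunc.X : RatFunc K) := by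
  intro h
  obtain ⟨k, hk, hXk⟩ := h.exists_pow_eq_one
  exact RatFunc.transcendental_X (IsIntegral.of_pow hk (hXk ▸ isIntegral_one)).isAlgebraic

-- `qPoch a` unfolds to `qPochhammer a RatFunc.X`.
/-- `Σ_{i=0}^{2n} (−1)^i (−q;q)_{2n−i} / ((q²;q)_{2n−i} (q;q)_{i+1})
  = (−q;q)_{2n+1} / (q²;q)_{2n+1}`. -/
theorem alternating_qPoch_identity (n : ℕ) :
    ∑ i ∈ Finset.range (2 * n + 1),
      (-1 : RatFunc ℚ) ^ i * qPoch (-RatFunc.X) (2 * n - i) /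
        (qPoch (RatFunc.X ^ 2) (2 * n - i) * qPoch RatFunc.X (i + 1)) =
    qPoch (-RatFunc.X) (2 * n + 1) / qPoch (RatFunc.X ^ 2) (2 * n + 1) :=
  sum_alternating_qPochhammer_div RatFunc.not_isOfFinOrder_X (even_two_mul n)
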